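/- \widetilde{UI}((X,X'):(Y,Y')\setminus Z) \ge \widetilde{UI}(X:Y\setminus Z): enlarging the target and the informative variable simultaneously does not decrease unique information. -/

import Mathlib

open scoped BigOperators Classical

noncomputable section

/-- Shannon entropy (in bits) of a distribution on a finite type. -/
def ent {A : Type*} [Fintype A] (q : A → ℝ) : ℝ :=
  -∑ a, q a * Real.logb 2 (q a)

def ent2 {A B : Type*} [Fintype A] [Fintype B] (q : A → B → ℝ) : ℝ :=
  ent (fun p : A × B => q p.1 p.2)

def ent3 {A B C : Type*} [Fintype A] [Fintype B] [Fintype C] (q : A → B → C → ℝ) : ℝ :=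
  ent (fun p : A × B × C => q p.1 p.2.1 p.2.2)

/-- Mutual information MI(A:B) (in bits) of a joint distribution `q`. -/
def MI {A B : Type*} [Fintype A] [Fintype B] (q : A → B → ℝ) : ℝ :=
  ent (fun a => ∑ b, q a b) + ent (fun b => ∑ a, q a b) - ent2 q

/-- Conditional mutual information MI(A:B|C) of a joint distribution `q` of (A,B,C):
`MI(A:B|C) = H(A,C) + H(B,C) - H(C) - H(A,B,C)`. -/
def CMI {A B C : Type*} [Fintype A] [Fintype B] [Fintype C] (q : A → B → C → ℝ) : ℝ :=
  ent2 (fun a c => ∑ b, q a b c) + ent2 (fun b c => ∑ a, q a b c)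
    - ent (fun c => ∑ a, ∑ b, q a b c) - ent3 q

/-- Coinformation CoI(A;B;C) = MI(A:B) - MI(A:B|C). -/
def CoI {A B C : Type*} [Fintype A] [Fintype B] [Fintype C] (q : A → B → C → ℝ) : ℝ :=
  MI (fun a b => ∑ c, q a b c) - CMI q

structure IsDist2 {A B : Type*} [Fintype A] [Fintype B] (q : A → B → ℝ) : Prop where
  nonneg : ∀ a b, 0 ≤ q a b
  sum_one : ∑ a, ∑ b, q a b = 1

structure IsDist3 {A B C : Type*} [Fintype A] [Fintype B] [Fintype C]
    (q : A → B → C → ℝ) : Prop where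
  nonneg : ∀ a b c, 0 ≤ q a b c
  sum_one : ∑ a, ∑ b, ∑ c, q a b c = 1

structure IsDist4 {A B C D : Type*} [Fintype A] [Fintype B] [Fintype C] [Fintype D]
    (q : A → B → C → D → ℝ) : Prop where
  nonneg : ∀ a b c d, 0 ≤ q a b c d
  sum_one : ∑ a, ∑ b, ∑ c, ∑ d, q a b c d = 1

structure IsDist5 {A B C D E : Type*} [Fintype A] [Fintype B] [Fintype C] [Fintype D] [Fintype E]
    (q : A → B → C → D → E → ℝ) : Prop where
  nonneg : ∀ a b c d e, 0 ≤ q a b c d e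
  sum_one : ∑ a, ∑ b, ∑ c, ∑ d, ∑ e, q a b c d e = 1

/-- Δ_P: the joint distributions of (X,Y,Z) having the same (X,Y)- and (X,Z)-marginals as P. -/
def Delta {A B C : Type*} [Fintype A] [Fintype B] [Fintype C] (p : A → B → C → ℝ) :
    Set (A → B → C → ℝ) :=
  {q | IsDist3 q ∧ (∀ a b, ∑ c, q a b c = ∑ c, p a b c)
      ∧ (∀ a c, ∑ b, q a b c = ∑ b, p a b c)}

/-- MI(X:(Y,Z)). -/
def MIpair {A B C : Type*} [Fintype A] [Fintype B] [Fintype C] (q : A → B → C → ℝ) : ℝ :=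
  MI (fun a (p : B × C) => q a p.1 p.2)

/-- The unique information UI~(X : Y \ Z) = min over Δ_P of MI_Q(X:Y|Z). -/
def UI {A B C : Type*} [Fintype A] [Fintype B] [Fintype C] (p : A → B → C → ℝ) : ℝ :=
  sInf (CMI '' Delta p)

/-- The unique information UI~(X : Z \ Y) = min over Δ_P of MI_Q(X:Z|Y). -/
def UIr {A B C : Type*} [Fintype A] [Fintype B] [Fintype C] (p : A → B → C → ℝ) : ℝ :=
  sInf ((fun q => CMI (fun a c b => q a b c)) '' Delta p)

/-- The shared information SI~(X : Y ; Z) = max over Δ_P of CoI_Q(X;Y;Z). -/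
def SI {A B C : Type*} [Fintype A] [Fintype B] [Fintype C] (p : A → B → C → ℝ) : ℝ :=
  sSup (CoI '' Delta p)

/-- The complementary information CI~(X : Y ; Z) = MI_P(X:(Y,Z)) - min over Δ_P of MI_Q(X:(Y,Z)). -/
def CI {A B C : Type*} [Fintype A] [Fintype B] [Fintype C] (p : A → B → C → ℝ) : ℝ :=
  MIpair p - sInf (MIpair '' Delta p)

section CMInonneg
open Finset Real
variable {A B C : Type*} [Fintype A] [Fintype B] [Fintype C]

lemma CMI_nonneg (q : A → B → C → ℝ) (h : IsDist3 q) : 0 ≤ CMI q := by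
  classical
  set mAC : A → C → ℝ := fun a c => ∑ b, q a b c with hmAC
  set mBC : B → C → ℝ := fun b c => ∑ a, q a b c with hmBC
  set mC : C → ℝ := fun c => ∑ a, ∑ b, q a b c with hmC
  have hqn := h.nonneg
  have hACn : ∀ a c, 0 ≤ mAC a c := fun a c => Finset.sum_nonneg fun b _ => hqn a b c
  have hBCn : ∀ b c, 0 ≤ mBC b c := fun b c => Finset.sum_nonneg fun a _ => hqn a b c
  have hCn : ∀ c, 0 ≤ mC c := fun c =>
    Finset.sum_nonneg fun a _ => Finset.sum_nonneg fun b _ => hqn a b c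
  have hsumAC : ∀ c, ∑ a, mAC a c = mC c := fun c => rfl
  have hsumBC : ∀ c, ∑ b, mBC b c = mC c := fun c =>
    Finset.sum_comm
  -- expression for CMI with logb
  have e1 : ∑ a, ∑ b, ∑ c, q a b c * Real.logb 2 (mAC a c)
      = ∑ a, ∑ c, mAC a c * Real.logb 2 (mAC a c) := by
    refine Finset.sum_congr rfl fun a _ => ?_
    rw [Finset.sum_comm]
    exact Finset.sum_congr rfl fun c _ => (Finset.sum_mul _ _ _).symm
  have e2 : ∑ a, ∑ b, ∑ c, q a b c * Real.logb 2 (mBC b c)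
      = ∑ b, ∑ c, mBC b c * Real.logb 2 (mBC b c) := by
    rw [Finset.sum_comm]
    refine Finset.sum_congr rfl fun b _ => ?_
    rw [Finset.sum_comm]
    exact Finset.sum_congr rfl fun c _ => (Finset.sum_mul _ _ _).symm
  have swap3 : ∀ (f : A → B → C → ℝ), ∑ a, ∑ b, ∑ c, f a b c = ∑ c, ∑ a, ∑ b, f a b c := by
    intro f
    have h1 : ∀ a : A, ∑ b, ∑ c, f a b c = ∑ c, ∑ b, f a b c := fun a => Finset.sum_comm
    simp_rw [h1]
    exact Finset.sum_comm
  have e3 : ∑ a, ∑ b, ∑ c, q a b c * Real.logb 2 (mC c)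
      = ∑ c, mC c * Real.logb 2 (mC c) := by
    rw [swap3]
    refine Finset.sum_congr rfl fun c _ => ?_
    simp only [← Finset.sum_mul]
    rfl
  have hexp : CMI q = ∑ a, ∑ b, ∑ c, q a b c *
      (Real.logb 2 (q a b c) + Real.logb 2 (mC c)
        - Real.logb 2 (mAC a c) - Real.logb 2 (mBC b c)) := by
    simp only [mul_sub, mul_add, Finset.sum_sub_distrib, Finset.sum_add_distrib]
    rw [e1, e2, e3]
    simp only [CMI, ent2, ent3, ent, Fintype.sum_prod_type]
    ring
  have hC1 : ∑ c, mC c = 1 := (swap3 q).symm.trans h.sum_one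
  have hlog2 : (0:ℝ) < Real.log 2 := Real.log_pos one_lt_two
  have hexp' : CMI q = (∑ a, ∑ b, ∑ c, q a b c *
      (Real.log (q a b c) + Real.log (mC c) - Real.log (mAC a c)
        - Real.log (mBC b c))) / Real.log 2 := by
    rw [hexp, Finset.sum_div]
    refine Finset.sum_congr rfl fun a _ => ?_
    rw [Finset.sum_div]
    refine Finset.sum_congr rfl fun b _ => ?_
    rw [Finset.sum_div]
    refine Finset.sum_congr rfl fun c _ => ?_
    simp only [Real.logb]
    ring
  rw [hexp']
  refine div_nonneg ?_ hlog2.le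
  set L : A → B → C → ℝ := fun a b c => if mC c = 0 then 0 else mAC a c * mBC b c / mC c with hL
  have hLnn : ∀ a b c, 0 ≤ L a b c := by
    intro a b c
    rw [hL]
    dsimp only
    split
    · exact le_refl 0
    · exact div_nonneg (mul_nonneg (hACn a c) (hBCn b c)) (hCn c)
  have key : ∀ a b c, q a b c - L a b c ≤ q a b c *
      (Real.log (q a b c) + Real.log (mC c) - Real.log (mAC a c)
        - Real.log (mBC b c)) := by
    intro a b c
    rcases eq_or_lt_of_le (hqn a b c) with h0 | hpos
    · rw [← h0, zero_mul]
      have := hLnn a b c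
      linarith
    · have hACpos : 0 < mAC a c :=
        lt_of_lt_of_le hpos (Finset.single_le_sum (fun b _ => hqn a b c) (Finset.mem_univ b))
      have hBCpos : 0 < mBC b c :=
        lt_of_lt_of_le hpos (Finset.single_le_sum (fun a _ => hqn a b c) (Finset.mem_univ a))
      have hCpos : 0 < mC c := lt_of_lt_of_le hACpos
        ((hsumAC c) ▸ Finset.single_le_sum (fun a _ => hACn a c) (Finset.mem_univ a))
      have hLval : L a b c = mAC a c * mBC b c / mC c := by
        rw [hL]; simp only [if_neg hCpos.ne']
      set t : ℝ := q a b c * mC c / (mAC a c * mBC b c) with ht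
      have htpos : 0 < t := by positivity
      have hlogt : Real.log t = Real.log (q a b c) + Real.log (mC c) - Real.log (mAC a c)
          - Real.log (mBC b c) := by
        rw [ht, Real.log_div (by positivity) (by positivity),
          Real.log_mul hpos.ne' hCpos.ne', Real.log_mul hACpos.ne' hBCpos.ne']
        ring
      rw [← hlogt, hLval]
      have h1 : 1 - t⁻¹ ≤ Real.log t := Real.one_sub_inv_le_log_of_pos htpos
      have h2 : q a b c * (1 - t⁻¹) ≤ q a b c * Real.log t :=
        mul_le_mul_of_nonneg_left h1 hpos.le
      have h3 : q a b c * (1 - t⁻¹) = q a b c - mAC a c * mBC b c / mC c := by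
        rw [ht]
        field_simp
      linarith
  have hLsum : ∑ a, ∑ b, ∑ c, L a b c ≤ 1 := by
    rw [swap3]
    calc ∑ c, ∑ a, ∑ b, L a b c ≤ ∑ c, mC c := by
          refine Finset.sum_le_sum fun c _ => ?_
          by_cases hc : mC c = 0
          · simp only [hL, if_pos hc, Finset.sum_const_zero]
            exact hCn c
          · calc ∑ a, ∑ b, L a b c = ∑ a, mAC a c * mC c / mC c := by
                  refine Finset.sum_congr rfl fun a _ => ?_
                  simp only [hL, if_neg hc]
                  rw [← Finset.sum_div, ← Finset.mul_sum, hsumBC c]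
              _ = ∑ a, mAC a c := by
                  refine Finset.sum_congr rfl fun a _ => ?_
                  rw [mul_div_assoc, div_self hc, mul_one]
              _ = mC c := hsumAC c
              _ ≤ mC c := le_rfl
      _ = 1 := hC1
  have hfinal : ∑ a, ∑ b, ∑ c, (q a b c - L a b c) ≤ ∑ a, ∑ b, ∑ c, q a b c *
      (Real.log (q a b c) + Real.log (mC c) - Real.log (mAC a c)
        - Real.log (mBC b c)) :=
    Finset.sum_le_sum fun a _ => Finset.sum_le_sum fun b _ => Finset.sum_le_sum fun c _ =>
      key a b c
  have hsplit : ∑ a, ∑ b, ∑ c, (q a b c - L a b c)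
      = (∑ a, ∑ b, ∑ c, q a b c) - ∑ a, ∑ b, ∑ c, L a b c := by
    simp [Finset.sum_sub_distrib]
  rw [hsplit, h.sum_one] at hfinal
  linarith

end CMInonneg
section Chain
open Finset
variable {A A' B B' C : Type*} [Fintype A] [Fintype A'] [Fintype B] [Fintype B'] [Fintype C]

lemma ent_reindex {ι κ : Type*} [Fintype ι] [Fintype κ] (e : ι ≃ κ) (q : κ → ℝ) :
    ent (fun i => q (e i)) = ent q := by
  unfold ent
  congr 1
  exact Fintype.sum_equiv e _ _ (fun i => rfl)

lemma sum3_flat {α β γ : Type*} [Fintype α] [Fintype β] [Fintype γ] (f : α → β → γ → ℝ) :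
    ∑ p : α × β × γ, f p.1 p.2.1 p.2.2 = ∑ a, ∑ b, ∑ c, f a b c := by
  rw [Fintype.sum_prod_type]
  exact Finset.sum_congr rfl fun a _ =>
    Fintype.sum_prod_type (f := fun y : β × γ => f a y.1 y.2)

lemma swap312 {α β γ : Type*} [Fintype α] [Fintype β] [Fintype γ] (f : α → β → γ → ℝ) :
    ∑ a, ∑ b, ∑ c, f a b c = ∑ c, ∑ a, ∑ b, f a b c := by
  have h1 : ∀ a, ∑ b, ∑ c, f a b c = ∑ c, ∑ b, f a b c := fun a => Finset.sum_comm
  simp_rw [h1]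
  exact Finset.sum_comm

lemma isDist3_chainA (q : (A × A') → B → C → ℝ) (h : IsDist3 q) :
    IsDist3 (fun (a' : A') (b : B) (ac : A × C) => q (ac.1, a') b ac.2) := by
  refine ⟨fun a' b ac => h.nonneg _ _ _, ?_⟩
  have h1 := h.sum_one
  rw [← sum3_flat] at h1 ⊢
  rw [← h1]
  exact Fintype.sum_equiv
    ⟨fun p : A' × B × (A × C) => ((p.2.2.1, p.1), p.2.1, p.2.2.2),
     fun p : (A × A') × B × C => (p.1.2, p.2.1, (p.1.1, p.2.2)),
     fun _ => rfl, fun _ => rfl⟩ _ _ (fun p => rfl)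

lemma isDist3_chainB (q : A → (B × B') → C → ℝ) (h : IsDist3 q) :
    IsDist3 (fun (a : A) (b' : B') (bc : B × C) => q a (bc.1, b') bc.2) := by
  refine ⟨fun a b' bc => h.nonneg _ _ _, ?_⟩
  have h1 := h.sum_one
  rw [← sum3_flat] at h1 ⊢
  rw [← h1]
  exact Fintype.sum_equiv
    ⟨fun p : A × B' × (B × C) => (p.1, (p.2.2.1, p.2.1), p.2.2.2),
     fun p : A × (B × B') × C => (p.1, p.2.1.2, (p.2.1.1, p.2.2)),
     fun _ => rfl, fun _ => rfl⟩ _ _ (fun p => rfl)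

lemma isDist3_margA (q : (A × A') → B → C → ℝ) (h : IsDist3 q) :
    IsDist3 (fun a b c => ∑ a', q (a, a') b c) := by
  refine ⟨fun a b c => Finset.sum_nonneg fun a' _ => h.nonneg _ _ _, ?_⟩
  have h1 := h.sum_one
  rw [← sum3_flat] at h1
  calc ∑ a, ∑ b, ∑ c, ∑ a', q (a, a') b c = ∑ a, ∑ a', ∑ b, ∑ c, q (a, a') b c :=
        Finset.sum_congr rfl fun a _ => swap312 (fun b c a' => q (a, a') b c)
    _ = ∑ p : A × A' × B × C, q (p.1, p.2.1) p.2.2.1 p.2.2.2 := by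
        rw [Fintype.sum_prod_type]
        exact Finset.sum_congr rfl fun a _ =>
          (sum3_flat (fun (a' : A') (b : B) (c : C) => q (a, a') b c)).symm
    _ = 1 := by
        rw [← h1]
        exact Fintype.sum_equiv
          ⟨fun p : A × A' × B × C => ((p.1, p.2.1), p.2.2.1, p.2.2.2),
           fun p : (A × A') × B × C => (p.1.1, p.1.2, p.2.1, p.2.2),
           fun _ => rfl, fun _ => rfl⟩ _ _ (fun p => rfl)

lemma isDist3_margB (q : A → (B × B') → C → ℝ) (h : IsDist3 q) :
    IsDist3 (fun a b c => ∑ b', q a (b, b') c) := by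
  refine ⟨fun a b c => Finset.sum_nonneg fun b' _ => h.nonneg _ _ _, ?_⟩
  have h1 := h.sum_one
  rw [← sum3_flat] at h1
  calc ∑ a, ∑ b, ∑ c, ∑ b', q a (b, b') c = ∑ a, ∑ b, ∑ b', ∑ c, q a (b, b') c :=
        Finset.sum_congr rfl fun a _ => Finset.sum_congr rfl fun b _ => Finset.sum_comm
    _ = ∑ p : A × B × B' × C, q p.1 (p.2.1, p.2.2.1) p.2.2.2 := by
        rw [Fintype.sum_prod_type]
        refine Finset.sum_congr rfl fun a _ => ?_
        exact (sum3_flat (fun (b : B) (b' : B') (c : C) => q a (b, b') c)).symm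
    _ = 1 := by
        rw [← h1]
        exact Fintype.sum_equiv
          ⟨fun p : A × B × B' × C => (p.1, (p.2.1, p.2.2.1), p.2.2.2),
           fun p : A × (B × B') × C => (p.1, p.2.1.1, p.2.1.2, p.2.2),
           fun _ => rfl, fun _ => rfl⟩ _ _ (fun p => rfl)
end Chain
section Chain2
open Finset
variable {A A' B B' C : Type*} [Fintype A] [Fintype A'] [Fintype B] [Fintype B'] [Fintype C]

lemma CMI_chain_left (q : (A × A') → B → C → ℝ) :
    CMI q = CMI (fun a b c => ∑ a', q (a, a') b c)
      + CMI (fun (a' : A') (b : B) (ac : A × C) => q (ac.1, a') b ac.2) := by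
  have hR1 : (ent2 fun (a' : A') (ac : A × C) => ∑ x : B, q (ac.1, a') x ac.2)
      = ent2 fun (a : A × A') (c : C) => ∑ b : B, q a b c :=
    ent_reindex ⟨fun p : A' × (A × C) => ((p.2.1, p.1), p.2.2),
      fun p => (p.1.2, (p.1.1, p.2)), fun _ => rfl, fun _ => rfl⟩
      (fun p : (A × A') × C => ∑ b : B, q p.1 b p.2)
  have hR2 : (ent2 fun (b : B) (ac : A × C) => ∑ x : A', q (ac.1, x) b ac.2)
      = ent3 fun (a : A) (b : B) (c : C) => ∑ a' : A', q (a, a') b c :=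
    ent_reindex ⟨fun p : B × (A × C) => (p.2.1, p.1, p.2.2),
      fun p => (p.2.1, (p.1, p.2.2)), fun _ => rfl, fun _ => rfl⟩
      (fun p : A × B × C => ∑ a' : A', q (p.1, a') p.2.1 p.2.2)
  have hR3 : (ent fun ac : A × C => ∑ x : A', ∑ x_1 : B, q (ac.1, x) x_1 ac.2)
      = ent2 fun (a : A) (c : C) => ∑ x : B, ∑ a' : A', q (a, a') x c := by
    unfold ent2
    congr 1
    funext ac
    exact Finset.sum_comm
  have hR4 : ent3 (fun (a' : A') (b : B) (ac : A × C) => q (ac.1, a') b ac.2) = ent3 q :=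
    ent_reindex ⟨fun p : A' × B × (A × C) => ((p.2.2.1, p.1), p.2.1, p.2.2.2),
      fun p => (p.1.2, p.2.1, (p.1.1, p.2.2)), fun _ => rfl, fun _ => rfl⟩
      (fun p : (A × A') × B × C => q p.1 p.2.1 p.2.2)
  have hM2 : (ent2 fun (b : B) (c : C) => ∑ x : A, ∑ a' : A', q (x, a') b c)
      = ent2 fun (b : B) (c : C) => ∑ a : A × A', q a b c := by
    unfold ent2
    congr 1
    funext p
    exact (Fintype.sum_prod_type (f := fun a : A × A' => q a p.1 p.2)).symm
  have hM3 : (ent fun c : C => ∑ x : A, ∑ x_1 : B, ∑ a' : A', q (x, a') x_1 c)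
      = ent fun c : C => ∑ a : A × A', ∑ b : B, q a b c := by
    congr 1
    funext c
    calc ∑ x : A, ∑ x_1 : B, ∑ a' : A', q (x, a') x_1 c
        = ∑ x : A, ∑ a' : A', ∑ x_1 : B, q (x, a') x_1 c :=
          Finset.sum_congr rfl fun x _ => Finset.sum_comm
      _ = ∑ a : A × A', ∑ b : B, q a b c :=
          (Fintype.sum_prod_type (f := fun a : A × A' => ∑ b : B, q a b c)).symm
  simp only [CMI]
  rw [hR1, hR2, hR3, hR4, hM2, hM3]
  ring
end Chain2
section Chain3
open Finset
variable {A A' B B' C : Type*} [Fintype A] [Fintype A'] [Fintype B] [Fintype B'] [Fintype C]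

lemma CMI_chain_right (q : A → (B × B') → C → ℝ) :
    CMI q = CMI (fun a b c => ∑ b', q a (b, b') c)
      + CMI (fun (a : A) (b' : B') (bc : B × C) => q a (bc.1, b') bc.2) := by
  have hS1 : (ent2 fun (a : A) (c : C) => ∑ x : B, ∑ b' : B', q a (x, b') c)
      = ent2 fun (a : A) (c : C) => ∑ b : B × B', q a b c := by
    unfold ent2
    congr 1
    funext p
    exact (Fintype.sum_prod_type (f := fun b : B × B' => q p.1 b p.2)).symm
  have hS3 : (ent fun c : C => ∑ x : A, ∑ x_1 : B, ∑ b' : B', q x (x_1, b') c)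
      = ent fun c : C => ∑ a : A, ∑ b : B × B', q a b c := by
    congr 1
    funext c
    refine Finset.sum_congr rfl fun a _ => ?_
    exact (Fintype.sum_prod_type (f := fun b : B × B' => q a b c)).symm
  have hU1 : (ent2 fun (a : A) (bc : B × C) => ∑ x : B', q a (bc.1, x) bc.2)
      = ent3 fun (a : A) (b : B) (c : C) => ∑ b' : B', q a (b, b') c := rfl
  have hU2 : (ent2 fun (b' : B') (bc : B × C) => ∑ x : A, q x (bc.1, b') bc.2)
      = ent2 fun (b : B × B') (c : C) => ∑ a : A, q a b c :=
    ent_reindex ⟨fun p : B' × (B × C) => ((p.2.1, p.1), p.2.2),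
      fun p => (p.1.2, (p.1.1, p.2)), fun _ => rfl, fun _ => rfl⟩
      (fun p : (B × B') × C => ∑ a : A, q a p.1 p.2)
  have hU3 : (ent fun bc : B × C => ∑ x : A, ∑ x_1 : B', q x (bc.1, x_1) bc.2)
      = ent2 fun (b : B) (c : C) => ∑ x : A, ∑ b' : B', q x (b, b') c := rfl
  have hU4 : ent3 (fun (a : A) (b' : B') (bc : B × C) => q a (bc.1, b') bc.2) = ent3 q :=
    ent_reindex ⟨fun p : A × B' × (B × C) => (p.1, (p.2.2.1, p.2.1), p.2.2.2),
      fun p => (p.1, p.2.1.2, (p.2.1.1, p.2.2)), fun _ => rfl, fun _ => rfl⟩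
      (fun p : A × (B × B') × C => q p.1 p.2.1 p.2.2)
  simp only [CMI]
  rw [hS1, hS3, hU1, hU2, hU3, hU4]
  ring
end Chain3
section Mono
open Finset
variable {A A' B B' C : Type*} [Fintype A] [Fintype A'] [Fintype B] [Fintype B'] [Fintype C]

lemma CMI_marginal_le (q : (A × A') → (B × B') → C → ℝ) (h : IsDist3 q) :
    CMI (fun a b c => ∑ a', ∑ b', q (a, a') (b, b') c) ≤ CMI q := by
  have hM : IsDist3 (fun (a : A) (bb' : B × B') (c : C) => ∑ a', q (a, a') bb' c) :=
    isDist3_margA q h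
  have h1 : CMI q = CMI (fun (a : A) (bb' : B × B') (c : C) => ∑ a', q (a, a') bb' c)
      + CMI (fun (a' : A') (b : B × B') (ac : A × C) => q (ac.1, a') b ac.2) :=
    CMI_chain_left q
  have h2 : CMI (fun (a : A) (bb' : B × B') (c : C) => ∑ a', q (a, a') bb' c)
      = CMI (fun (a : A) (b : B) (c : C) => ∑ b', ∑ a', q (a, a') (b, b') c)
        + CMI (fun (a : A) (b' : B') (bc : B × C) => ∑ a', q (a, a') (bc.1, b') bc.2) :=
    CMI_chain_right _
  have hr1 : 0 ≤ CMI (fun (a' : A') (b : B × B') (ac : A × C) => q (ac.1, a') b ac.2) :=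
    CMI_nonneg _ (isDist3_chainA q h)
  have hr2 : 0 ≤ CMI (fun (a : A) (b' : B') (bc : B × C) => ∑ a', q (a, a') (bc.1, b') bc.2) :=
    CMI_nonneg _ (isDist3_chainB _ hM)
  have hswap : (fun (a : A) (b : B) (c : C) => ∑ a', ∑ b', q (a, a') (b, b') c)
      = fun (a : A) (b : B) (c : C) => ∑ b', ∑ a', q (a, a') (b, b') c := by
    funext a b c
    exact Finset.sum_comm
  rw [hswap]
  linarith [h1, h2, hr1, hr2]
end Mono
section Glue
open Finset

lemma sum4_flat {α β γ δ : Type*} [Fintype α] [Fintype β] [Fintype γ] [Fintype δ]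
    (f : α → β → γ → δ → ℝ) :
    ∑ p : α × β × γ × δ, f p.1 p.2.1 p.2.2.1 p.2.2.2 = ∑ a, ∑ b, ∑ c, ∑ d, f a b c d := by
  rw [Fintype.sum_prod_type]
  exact Finset.sum_congr rfl fun a _ => sum3_flat (fun b c d => f a b c d)

lemma sum5_flat {α β γ δ ε : Type*} [Fintype α] [Fintype β] [Fintype γ] [Fintype δ] [Fintype ε]
    (f : α → β → γ → δ → ε → ℝ) :
    ∑ p : α × β × γ × δ × ε, f p.1 p.2.1 p.2.2.1 p.2.2.2.1 p.2.2.2.2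
      = ∑ a, ∑ b, ∑ c, ∑ d, ∑ e, f a b c d e := by
  rw [Fintype.sum_prod_type]
  exact Finset.sum_congr rfl fun a _ => sum4_flat (fun b c d e => f a b c d e)

end Glue

/-- `UI~((X,X'):(Y,Y')\Z) ≥ UI~(X:Y\Z)`: enlarging the target and the informative
variable simultaneously does not decrease unique information. -/
theorem UI_monotone_target_and_source {X X' Y Y' Z : Type*}
    [Fintype X] [Fintype X'] [Fintype Y] [Fintype Y'] [Fintype Z]
    (p' : X → X' → Y → Y' → Z → ℝ) (hp : IsDist5 p') :
    UI (fun (a : X × X') (b : Y × Y') z => p' a.1 a.2 b.1 b.2 z)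
      ≥ UI (fun x y z => ∑ x', ∑ y', p' x x' y y' z) := by
  classical
  have hP : IsDist3 (fun (a : X × X') (b : Y × Y') z => p' a.1 a.2 b.1 b.2 z) := by
    refine ⟨fun a b z => hp.nonneg _ _ _ _ _, ?_⟩
    rw [← sum3_flat (fun (a : X × X') (b : Y × Y') (z : Z) => p' a.1 a.2 b.1 b.2 z),
      ← hp.sum_one, ← sum5_flat p']
    exact Fintype.sum_equiv
      ⟨fun p : (X × X') × (Y × Y') × Z => (p.1.1, p.1.2, p.2.1.1, p.2.1.2, p.2.2),
       fun p => ((p.1, p.2.1), (p.2.2.1, p.2.2.2.1), p.2.2.2.2),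
       fun _ => rfl, fun _ => rfl⟩ _ _ (fun p => rfl)
  have hPmem : (fun (a : X × X') (b : Y × Y') z => p' a.1 a.2 b.1 b.2 z)
      ∈ Delta (fun (a : X × X') (b : Y × Y') z => p' a.1 a.2 b.1 b.2 z) :=
    ⟨hP, fun _ _ => rfl, fun _ _ => rfl⟩
  have hne : (CMI '' Delta (fun (a : X × X') (b : Y × Y') z => p' a.1 a.2 b.1 b.2 z)).Nonempty :=
    ⟨_, Set.mem_image_of_mem _ hPmem⟩
  have hbdd : BddBelow (CMI '' Delta (fun x y z => ∑ x', ∑ y', p' x x' y y' z)) := by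
    refine ⟨0, ?_⟩
    rintro r ⟨s, hs, rfl⟩
    exact CMI_nonneg s hs.1
  rw [ge_iff_le, UI, UI]
  refine le_csInf hne ?_
  rintro r ⟨q', hq', rfl⟩
  have hqd : IsDist3 q' := hq'.1
  have hmem : (fun x y z => ∑ x', ∑ y', q' (x, x') (y, y') z)
      ∈ Delta (fun x y z => ∑ x', ∑ y', p' x x' y y' z) := by
    refine ⟨⟨fun x y z => Finset.sum_nonneg fun x' _ => Finset.sum_nonneg fun y' _ =>
      hqd.nonneg _ _ _, ?_⟩, ?_, ?_⟩
    · rw [← sum5_flat (fun x y z x' y' => q' (x, x') (y, y') z), ← hqd.sum_one,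
        ← sum3_flat (fun (a : X × X') (b : Y × Y') (z : Z) => q' a b z)]
      exact Fintype.sum_equiv
        ⟨fun p : X × Y × Z × X' × Y' => ((p.1, p.2.2.2.1), (p.2.1, p.2.2.2.2), p.2.2.1),
         fun p => (p.1.1, p.2.1.1, p.2.2, p.1.2, p.2.1.2),
         fun _ => rfl, fun _ => rfl⟩ _ _ (fun p => rfl)
    · intro x y
      calc ∑ z, ∑ x', ∑ y', q' (x, x') (y, y') z
          = ∑ x', ∑ y', ∑ z, q' (x, x') (y, y') z :=
            (swap312 (fun x' y' z => q' (x, x') (y, y') z)).symm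
        _ = ∑ x', ∑ y', ∑ z, p' x x' y y' z :=
            Finset.sum_congr rfl fun x' _ => Finset.sum_congr rfl fun y' _ =>
              hq'.2.1 (x, x') (y, y')
        _ = ∑ z, ∑ x', ∑ y', p' x x' y y' z := swap312 (fun x' y' z => p' x x' y y' z)
    · intro x z
      calc ∑ y, ∑ x', ∑ y', q' (x, x') (y, y') z
          = ∑ x', ∑ y, ∑ y', q' (x, x') (y, y') z := Finset.sum_comm
        _ = ∑ x', ∑ b : Y × Y', q' (x, x') b z :=
            Finset.sum_congr rfl fun x' _ =>
              (Fintype.sum_prod_type (f := fun b : Y × Y' => q' (x, x') b z)).symm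
        _ = ∑ x', ∑ b : Y × Y', p' x x' b.1 b.2 z :=
            Finset.sum_congr rfl fun x' _ => hq'.2.2 (x, x') z
        _ = ∑ x', ∑ y, ∑ y', p' x x' y y' z :=
            Finset.sum_congr rfl fun x' _ =>
              Fintype.sum_prod_type (f := fun b : Y × Y' => p' x x' b.1 b.2 z)
        _ = ∑ y, ∑ x', ∑ y', p' x x' y y' z := Finset.sum_comm
  calc sInf (CMI '' Delta (fun x y z => ∑ x', ∑ y', p' x x' y y' z))
      ≤ CMI (fun x y z => ∑ x', ∑ y', q' (x, x') (y, y') z) :=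
        csInf_le hbdd (Set.mem_image_of_mem _ hmem)
    _ ≤ CMI q' := CMI_marginal_le q' hqd

end
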